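/- For the function $g_n$ defined by $g_n(t) = (1 - \frac{|2t-t_k-t_{k-1}|}{t_k-t_{k-1}}) e_k$ for $t \in (t_{k-1},t_k]$, $1\le k\le n$, and $g_n(t)=0$ otherwise (where $0 = t_0 < t_1 < \cdots < t_n \le 1$ with $t_k - t_{k-1}$ decreasing in $k$), and any $0 < \alpha \le 1$, $g_n$ is $\alpha$-Hölder continuous on $[0,1]$ with $\sup_{0 \le s < t \le 1} \frac{\|g_n(t)-g_n(s)\|_{\ell^p_n}}{|t-s|^{\alpha}} \le 4 (t_n - t_{n-1})^{-\alpha}$. -/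

import Mathlib

open Finset Set

/-!
Each coordinate of `g` is a tent of height `1` over `(t_k, t_{k+1}]`, so it is bounded by `1` and
`2 / (t_{k+1} - t_k)`-Lipschitz, where `t_{k+1} - t_k ≥ δ := t_n - t_{n-1}`. The tents have disjoint
supports, so `g t - g s` has at most two nonzero coordinates, and its `ℓ^p` norm is at most its
`ℓ^1` norm, hence at most `2 min(1, 2 (t - s) / δ) ≤ 4 ((t - s) / δ)^α`.
-/

noncomputable def tent (a b : ℝ) : ℝ → ℝ :=
  (Ioc a b).indicator fun x => 1 - |2 * x - b - a| / (b - a)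

section Tent

variable {a b : ℝ}

lemma tent_nonneg (x : ℝ) : 0 ≤ tent a b x := by
  unfold tent
  refine indicator_nonneg (fun y hy => ?_) x
  rw [sub_nonneg, div_le_one (by linarith [hy.1, hy.2]), abs_le]
  constructor <;> linarith [hy.1, hy.2]

lemma tent_le_one (x : ℝ) : tent a b x ≤ 1 :=
  indicator_apply_le'
    (fun hx => sub_le_self _ (div_nonneg (abs_nonneg _) (by linarith [hx.1, hx.2])))
    fun _ => zero_le_one

lemma mem_Ioc_of_tent_ne_zero {x : ℝ} (hx : tent a b x ≠ 0) : x ∈ Ioc a b :=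
  mem_of_indicator_ne_zero hx

lemma tent_eq_max (hab : a < b) (x : ℝ) :
    tent a b x = max (1 - |2 * x - b - a| / (b - a)) 0 := by
  have hba : 0 < b - a := sub_pos.2 hab
  by_cases hx : x ∈ Ioc a b
  · have h := tent_nonneg (a := a) (b := b) x
    rw [tent, indicator_of_mem hx] at h ⊢
    exact (max_eq_left h).symm
  · rw [tent, indicator_of_notMem hx, eq_comm, max_eq_right]
    rw [sub_nonpos, one_le_div hba]
    rw [Set.mem_Ioc, not_and_or, not_lt, not_le] at hx
    rcases hx with hx | hx
    · linarith [neg_le_abs (2 * x - b - a)]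
    · linarith [le_abs_self (2 * x - b - a)]

lemma abs_tent_sub_tent_le_one (s t : ℝ) : |tent a b t - tent a b s| ≤ 1 :=
  abs_sub_le_of_nonneg_of_le (tent_nonneg t) (tent_le_one t) (tent_nonneg s) (tent_le_one s)

lemma abs_tent_sub_tent_le (hab : a < b) (s t : ℝ) :
    |tent a b t - tent a b s| ≤ 2 / (b - a) * |t - s| := by
  have hba : 0 < b - a := sub_pos.2 hab
  rw [tent_eq_max hab, tent_eq_max hab]
  calc _ ≤ |(1 - |2 * t - b - a| / (b - a)) - (1 - |2 * s - b - a| / (b - a))| :=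
        abs_max_sub_max_le_abs _ _ _
    _ = |(|2 * s - b - a| - |2 * t - b - a|) / (b - a)| := by
        congr 1
        ring
    _ = |(|2 * s - b - a| - |2 * t - b - a|)| / (b - a) := by
        rw [abs_div, abs_of_pos hba]
    _ ≤ |(2 * s - b - a) - (2 * t - b - a)| / (b - a) :=
        div_le_div_of_nonneg_right (abs_abs_sub_abs_le_abs_sub _ _) hba.le
    _ = 2 / (b - a) * |t - s| := by
        rw [show (2 * s - b - a) - (2 * t - b - a) = 2 * (s - t) by ring, abs_mul, abs_two,
          abs_sub_comm]
        ring

lemma abs_tent_sub_tent_le_min {δ : ℝ} (hδ : 0 < δ) (hδab : δ ≤ b - a) (s t : ℝ) :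
    |tent a b t - tent a b s| ≤ min 1 (2 * (|t - s| / δ)) := by
  refine le_min (abs_tent_sub_tent_le_one s t) ((abs_tent_sub_tent_le (by linarith) s t).trans ?_)
  calc 2 / (b - a) * |t - s| ≤ 2 / δ * |t - s| := by gcongr
    _ = 2 * (|t - s| / δ) := by ring

end Tent

lemma eq_of_mem_Ioc_of_mem_Ioc {ts : ℕ → ℝ} {n : ℕ} (hts : ∀ k < n, ts k ≤ ts (k + 1))
    {i j : ℕ} (hi : i < n) (hj : j < n) {x : ℝ}
    (hxi : x ∈ Ioc (ts i) (ts (i + 1))) (hxj : x ∈ Ioc (ts j) (ts (j + 1))) : i = j := by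
  -- Freezing `ts` after `n` makes it monotone on all of `ℕ`.
  set f : ℕ → ℝ := fun k => ts (min k n)
  have hf : Monotone f := by
    refine monotone_nat_of_le_succ fun k => ?_
    rcases lt_or_ge k n with hk | hk
    · simpa [f, hk.le, Nat.succ_le_of_lt hk] using hts k hk
    · simp [f, hk, hk.trans k.le_succ]
  have hIoc : ∀ k < n, Ioc (ts k) (ts (k + 1)) = Ioc (f k) (f (Order.succ k)) := by
    intro k hk
    simp only [f, Order.succ_eq_add_one, min_eq_left hk.le, min_eq_left (show k + 1 ≤ n by omega)]
  rw [hIoc i hi] at hxi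
  rw [hIoc j hj] at hxj
  exact hf.pairwise_disjoint_on_Ioc_succ.eq (not_disjoint_iff.2 ⟨x, hxi, hxj⟩)

lemma rpow_sum_le_sum_rpow {ι : Type*} (s : Finset ι) {f : ι → ℝ} (hf : ∀ i ∈ s, 0 ≤ f i)
    {q : ℝ} (hq0 : 0 < q) (hq1 : q ≤ 1) : (∑ i ∈ s, f i) ^ q ≤ ∑ i ∈ s, f i ^ q := by
  classical
  induction s using Finset.induction_on with
  | empty => simp [Real.zero_rpow hq0.ne']
  | insert a s ha ih =>
    rw [sum_insert ha, sum_insert ha]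
    have hfs : ∀ i ∈ s, 0 ≤ f i := fun i hi => hf i (mem_insert_of_mem hi)
    calc (f a + ∑ i ∈ s, f i) ^ q ≤ f a ^ q + (∑ i ∈ s, f i) ^ q :=
          Real.rpow_add_le_add_rpow (hf a (mem_insert_self a s)) (sum_nonneg hfs) hq0.le hq1
      _ ≤ f a ^ q + ∑ i ∈ s, f i ^ q := by gcongr; exact ih hfs

lemma rpow_sum_abs_rpow_le_sum_abs {ι : Type*} [Fintype ι] (v : ι → ℝ) {p : ℝ} (hp : 1 ≤ p) :
    (∑ i, |v i| ^ p) ^ (1 / p) ≤ ∑ i, |v i| := by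
  have hp0 : 0 < p := by linarith
  calc (∑ i, |v i| ^ p) ^ (1 / p) ≤ ∑ i, (|v i| ^ p) ^ (1 / p) :=
        rpow_sum_le_sum_rpow _ (fun i _ => by positivity) (by positivity)
          ((div_le_one hp0).2 hp)
    _ = ∑ i, |v i| := by simp [one_div, Real.rpow_rpow_inv (abs_nonneg _) hp0.ne']

lemma sum_abs_sub_le_two_mul {ι : Type*} [Fintype ι] {v w : ι → ℝ}
    (hv : (Function.support v).Subsingleton) (hw : (Function.support w).Subsingleton)
    {m : ℝ} (hm0 : 0 ≤ m) (hm : ∀ i, |v i - w i| ≤ m) : ∑ i, |v i - w i| ≤ 2 * m := by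
  classical
  have hcard : ∀ u : ι → ℝ, (Function.support u).Subsingleton → #(univ.filter (u · ≠ 0)) ≤ 1 :=
    fun u hu => card_le_one.2 fun i hi j hj => hu (by simpa using hi) (by simpa using hj)
  set S : Finset ι := univ.filter (v · ≠ 0) ∪ univ.filter (w · ≠ 0)
  calc ∑ i, |v i - w i| = ∑ i ∈ S, |v i - w i| := by
        refine (sum_subset (subset_univ S) fun i _ hi => ?_).symm
        simp only [S, Finset.mem_union, Finset.mem_filter, Finset.mem_univ, true_and, not_or,
          not_not] at hi
        simp [hi.1, hi.2]
    _ ≤ #S • m := sum_le_card_nsmul _ _ _ fun i _ => hm i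
    _ ≤ 2 * m := by
        rw [nsmul_eq_mul]
        gcongr
        exact_mod_cast (Finset.card_union_le _ _).trans (add_le_add (hcard v hv) (hcard w hw))

lemma min_one_mul_le_mul_rpow {c x α : ℝ} (hc : 1 ≤ c) (hx : 0 ≤ x) (hα0 : 0 ≤ α)
    (hα1 : α ≤ 1) : min 1 (c * x) ≤ c * x ^ α := by
  rcases le_total x 1 with hx1 | hx1
  · exact (min_le_right _ _).trans (by gcongr; exact Real.self_le_rpow_of_le_one hx hx1 hα1)
  · calc min 1 (c * x) ≤ 1 := min_le_left _ _
      _ ≤ x ^ α := Real.one_le_rpow hx1 hα0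
      _ ≤ c * x ^ α := le_mul_of_one_le_left (by positivity) hc

theorem stmt_7_general (n : ℕ) (hn : 1 ≤ n) (ts : ℕ → ℝ)
    (htsmono : ∀ k < n, ts k < ts (k + 1))
    (htsdec : ∀ k : ℕ, 1 ≤ k → k ≤ n → ts n - ts (n - 1) ≤ ts k - ts (k - 1))
    (α : ℝ) (hα0 : 0 < α) (hα1 : α ≤ 1) (p : ℝ) (hp : 1 ≤ p)
    (g : ℝ → Fin n → ℝ)
    (hg : ∀ t, g t = ∑ k : Fin n,
      Set.indicator (Set.Ioc (ts k) (ts (k + 1)))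
        (fun s => 1 - |2 * s - ts (k + 1) - ts k| / (ts (k + 1) - ts k)) t •
        (Pi.single k 1 : Fin n → ℝ)) :
    ∀ s t : ℝ, 0 ≤ s → s < t → t ≤ 1 →
      (∑ j : Fin n, |g t j - g s j| ^ p) ^ (1 / p) ≤
        4 * (ts n - ts (n - 1)) ^ (-α) * (t - s) ^ α := by
  intro s t _ hst _
  set δ := ts n - ts (n - 1)
  have hδ : 0 < δ := by
    have := htsmono (n - 1) (by omega)
    rw [Nat.sub_add_cancel hn] at this
    linarith
  have hts : 0 < t - s := sub_pos.2 hst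
  have hg_apply : ∀ x (j : Fin n), g x j = tent (ts j) (ts (j + 1)) x := by
    intro x j
    simp [hg, tent, Pi.single_apply]
  have hsupp : ∀ x, (Function.support (g x)).Subsingleton := by
    intro x i hi j hj
    rw [Function.mem_support, hg_apply] at hi hj
    exact Fin.ext (eq_of_mem_Ioc_of_mem_Ioc (fun k hk => (htsmono k hk).le) i.2 j.2
      (mem_Ioc_of_tent_ne_zero hi) (mem_Ioc_of_tent_ne_zero hj))
  have hcoord : ∀ j : Fin n, |g t j - g s j| ≤ min 1 (2 * ((t - s) / δ)) := by
    intro j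
    rw [hg_apply, hg_apply, ← abs_of_pos hts]
    exact abs_tent_sub_tent_le_min hδ (by simpa using htsdec (j + 1) (by omega) (by omega)) s t
  calc (∑ j, |g t j - g s j| ^ p) ^ (1 / p) ≤ ∑ j, |g t j - g s j| :=
        rpow_sum_abs_rpow_le_sum_abs _ hp
    _ ≤ 2 * min 1 (2 * ((t - s) / δ)) :=
        sum_abs_sub_le_two_mul (hsupp t) (hsupp s) (by positivity) hcoord
    _ ≤ 2 * (2 * ((t - s) / δ) ^ α) := by
        gcongr
        exact min_one_mul_le_mul_rpow one_le_two (by positivity) hα0.le hα1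
    _ = 4 * δ ^ (-α) * (t - s) ^ α := by
        rw [Real.div_rpow hts.le hδ.le, Real.rpow_neg hδ.le]
        ring

theorem stmt_7 (n : ℕ) (hn : 1 ≤ n) (ts : ℕ → ℝ)
    (hts0 : ts 0 = 0) (htsmono : ∀ k < n, ts k < ts (k + 1)) (htsn : ts n ≤ 1)
    (htsdec : ∀ k : ℕ, 1 ≤ k → k ≤ n → ts n - ts (n - 1) ≤ ts k - ts (k - 1))
    (α : ℝ) (hα0 : 0 < α) (hα1 : α ≤ 1) (p : ℝ) (hp : 1 ≤ p)
    (g : ℝ → Fin n → ℝ)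
    (hg : ∀ t, g t = ∑ k : Fin n,
      Set.indicator (Set.Ioc (ts k) (ts (k + 1)))
        (fun s => 1 - |2 * s - ts (k + 1) - ts k| / (ts (k + 1) - ts k)) t •
        (Pi.single k 1 : Fin n → ℝ)) :
    ∀ s t : ℝ, 0 ≤ s → s < t → t ≤ 1 →
      (∑ j : Fin n, |g t j - g s j| ^ p) ^ (1 / p) ≤
        4 * (ts n - ts (n - 1)) ^ (-α) * (t - s) ^ α :=
  stmt_7_general n hn ts htsmono htsdec α hα0 hα1 p hp g hg
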